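/- arXiv:1512.07447 — 3 statements merged into one kernel-verified Lean document; each statement's English description precedes it below -/
import Mathlib

section
/- Let 0 < x_1 < y_1 < x_2 < y_2 < ... < x_n < y_n < 1 and let ρ: (0, ∞) → [0, ∞) be measurable with ∫_{x_i}^{y_i} ρ(r) dr ≥ 1 for each i = 1, ..., n. Then ∫_{0}^{∞} ρ(r)² · r dr ≥ n² / log(1/x_1). -/
/-!
On a ring `x < r ≤ y`, Cauchy–Schwarz against the weight `1 / r` gives
`1 ≤ (∫ ρ)² ≤ (∫ ρ² r) · log (y / x)`. The rings `(x i, y i]` are disjoint and their logarithmic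
widths `t i = log (y i / x i)` add up to at most `log (1 / x 1)`, so summing over the rings and
using Cauchy–Schwarz once more, as `n² / ∑ t i ≤ ∑ 1 / t i`, gives the bound.
-/

open MeasureTheory Set Real

lemma setLIntegral_Ioc_ofReal_inv {a b : ℝ} (ha : 0 < a) (hab : a ≤ b) :
    ∫⁻ r in Ioc a b, ENNReal.ofReal r⁻¹ = ENNReal.ofReal (log (b / a)) := by
  have hint : IntegrableOn (fun r : ℝ => r⁻¹) (Ioc a b) :=
    (intervalIntegral.intervalIntegrable_inv (fun r hr => (ha.trans_le ?_).ne') continuousOn_id).1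
  rw [← ofReal_integral_eq_lintegral_ofReal hint, ← intervalIntegral.integral_of_le hab,
    integral_inv_of_pos ha (ha.trans_le hab)]
  · filter_upwards [ae_restrict_mem measurableSet_Ioc] with r hr
    exact inv_nonneg.2 (ha.trans hr.1).le
  · simpa [hab] using hr.1

lemma ofReal_le_sqrt_sq_mul_mul_sqrt_inv (ρ : ℝ) {r : ℝ} (hr : 0 < r) :
    ENNReal.ofReal ρ ≤
      ENNReal.ofReal (ρ ^ 2 * r) ^ (1 / 2 : ℝ) * ENNReal.ofReal r⁻¹ ^ (1 / 2 : ℝ) := by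
  rw [← ENNReal.mul_rpow_of_nonneg _ _ (by norm_num), ← ENNReal.ofReal_mul (by positivity),
    mul_assoc, mul_inv_cancel₀ hr.ne', mul_one,
    ENNReal.ofReal_rpow_of_nonneg (sq_nonneg _) (by norm_num), ← sqrt_eq_rpow, sqrt_sq_eq_abs]
  exact ENNReal.ofReal_le_ofReal (le_abs_self ρ)

lemma inv_log_div_le_setLIntegral_sq_mul {a b : ℝ} (ha : 0 < a) (hab : a < b) {ρ : ℝ → ℝ}
    (hρ : Measurable ρ) (h : 1 ≤ ∫⁻ r in Ioc a b, ENNReal.ofReal (ρ r)) :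
    ENNReal.ofReal (log (b / a))⁻¹ ≤ ∫⁻ r in Ioc a b, ENNReal.ofReal (ρ r ^ 2 * r) := by
  have hlog : 0 < log (b / a) := log_pos ((one_lt_div ha).2 hab)
  set E := ∫⁻ r in Ioc a b, ENNReal.ofReal (ρ r ^ 2 * r)
  have hET : 1 ≤ (ENNReal.ofReal (log (b / a)) * E) ^ (1 / 2 : ℝ) :=
    calc 1 ≤ ∫⁻ r in Ioc a b, ENNReal.ofReal (ρ r) := h
      _ ≤ ∫⁻ r in Ioc a b, ENNReal.ofReal (ρ r ^ 2 * r) ^ (1 / 2 : ℝ) *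
            ENNReal.ofReal r⁻¹ ^ (1 / 2 : ℝ) :=
        setLIntegral_mono' measurableSet_Ioc fun r hr =>
          ofReal_le_sqrt_sq_mul_mul_sqrt_inv _ (ha.trans hr.1)
      _ ≤ E ^ (1 / 2 : ℝ) * (∫⁻ r in Ioc a b, ENNReal.ofReal r⁻¹) ^ (1 / 2 : ℝ) :=
        ENNReal.lintegral_mul_norm_pow_le (by fun_prop) (by fun_prop) (by norm_num) (by norm_num)
          (by norm_num)
      _ = _ := by
        rw [setLIntegral_Ioc_ofReal_inv ha hab.le, mul_comm,
          ENNReal.mul_rpow_of_nonneg _ _ (by norm_num)]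
  rw [← ENNReal.one_rpow (1 / 2), ENNReal.rpow_le_rpow_iff (by norm_num)] at hET
  rwa [ENNReal.ofReal_inv_of_pos hlog, ENNReal.inv_le_iff_le_mul (fun _ => by simpa) (by simp)]

lemma Finset.sq_card_div_le_sum_inv {ι : Type*} (s : Finset ι) {t : ι → ℝ} {L : ℝ}
    (ht : ∀ i ∈ s, 0 < t i) (hL : ∑ i ∈ s, t i ≤ L) :
    (s.card : ℝ) ^ 2 / L ≤ ∑ i ∈ s, (t i)⁻¹ := by
  rcases s.eq_empty_or_nonempty with rfl | hs
  · simp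
  calc (s.card : ℝ) ^ 2 / L ≤ (∑ i ∈ s, (1 : ℝ)) ^ 2 / ∑ i ∈ s, t i := by
        rw [Finset.sum_const, nsmul_one]
        exact div_le_div_of_nonneg_left (by positivity) (Finset.sum_pos ht hs) hL
    _ ≤ ∑ i ∈ s, 1 ^ 2 / t i := Finset.sq_sum_div_le_sum_sq_div s _ ht
    _ = ∑ i ∈ s, (t i)⁻¹ := by simp

lemma sum_Icc_sub_le_of_le_succ {a b : ℕ → ℝ} {n : ℕ} (hn : 1 ≤ n)
    (h : ∀ i, 1 ≤ i → i < n → b i ≤ a (i + 1)) :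
    ∑ i ∈ Finset.Icc 1 n, (b i - a i) ≤ b n - a 1 := by
  induction n, hn using Nat.le_induction with
  | base => simp
  | succ k hk ih =>
    rw [Finset.sum_Icc_succ_top (by omega)]
    linarith [ih fun i hi hik => h i hi (by omega), h k hk (by omega)]

section Chain

variable {n : ℕ} {x y : ℕ → ℝ}

lemma right_le_left_of_chain (hxy : ∀ i, 1 ≤ i → i ≤ n → x i < y i)
    (hyx : ∀ i, 1 ≤ i → i < n → y i < x (i + 1)) {i j : ℕ} (hi : 1 ≤ i) (hij : i < j)
    (hj : j ≤ n) : y i ≤ x j := by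
  induction j, hij using Nat.le_induction with
  | base => exact (hyx i hi (by omega)).le
  | succ k hik ih =>
    exact (ih (by omega)).trans
      ((hxy k (by omega) (by omega)).trans (hyx k (by omega) (by omega))).le

lemma left_pos_of_chain (hxy : ∀ i, 1 ≤ i → i ≤ n → x i < y i)
    (hyx : ∀ i, 1 ≤ i → i < n → y i < x (i + 1)) (hx1 : 0 < x 1) {i : ℕ}
    (hi : i ∈ Finset.Icc 1 n) : 0 < x i := by
  obtain ⟨hi, hin⟩ := Finset.mem_Icc.1 hi
  rcases hi.eq_or_lt with rfl | hi
  · exact hx1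
  · exact hx1.trans ((hxy 1 le_rfl (by omega)).trans_le
      (right_le_left_of_chain hxy hyx le_rfl hi hin))

lemma pairwiseDisjoint_Ioc_of_chain (hxy : ∀ i, 1 ≤ i → i ≤ n → x i < y i)
    (hyx : ∀ i, 1 ≤ i → i < n → y i < x (i + 1)) :
    (Finset.Icc 1 n : Set ℕ).PairwiseDisjoint fun i => Ioc (x i) (y i) := by
  have hlt : ∀ i ∈ Finset.Icc 1 n, ∀ j ∈ Finset.Icc 1 n, i < j →
      Disjoint (Ioc (x i) (y i)) (Ioc (x j) (y j)) := fun i hi j hj hij =>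
    Ioc_disjoint_Ioc_of_le <|
      right_le_left_of_chain hxy hyx (Finset.mem_Icc.1 hi).1 hij (Finset.mem_Icc.1 hj).2
  intro i hi j hj hij
  rcases hij.lt_or_gt with h | h
  · exact hlt i hi j hj h
  · exact (hlt j hj i hi h).symm

lemma sum_log_div_le_of_chain (hxy : ∀ i, 1 ≤ i → i ≤ n → x i < y i)
    (hyx : ∀ i, 1 ≤ i → i < n → y i < x (i + 1)) (hx1 : 0 < x 1) (hn : 1 ≤ n) :
    ∑ i ∈ Finset.Icc 1 n, log (y i / x i) ≤ log (y n / x 1) := by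
  have hx (i) (hi : i ∈ Finset.Icc 1 n) : 0 < x i := left_pos_of_chain hxy hyx hx1 hi
  have hy (i) (hi : i ∈ Finset.Icc 1 n) : 0 < y i :=
    (hx i hi).trans (hxy i (Finset.mem_Icc.1 hi).1 (Finset.mem_Icc.1 hi).2)
  have hn_mem : n ∈ Finset.Icc 1 n := Finset.mem_Icc.2 ⟨hn, le_rfl⟩
  rw [Finset.sum_congr rfl fun i hi => log_div (hy i hi).ne' (hx i hi).ne',
    log_div (hy n hn_mem).ne' hx1.ne']
  exact sum_Icc_sub_le_of_le_succ hn fun i hi hin =>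
    log_le_log (hy i (Finset.mem_Icc.2 ⟨hi, hin.le⟩)) (hyx i hi hin).le

end Chain

theorem stmt_5_general (n : ℕ) (hn : 1 ≤ n) (x y : ℕ → ℝ)
    (hx1 : 0 < x 1)
    (hxy : ∀ i, 1 ≤ i → i ≤ n → x i < y i)
    (hyx : ∀ i, 1 ≤ i → i < n → y i < x (i + 1))
    (hyn : y n < 1)
    (ρ : ℝ → ℝ) (hmeas : Measurable ρ)
    (hadm : ∀ i, 1 ≤ i → i ≤ n →
      1 ≤ ∫⁻ r in Set.Ioc (x i) (y i), ENNReal.ofReal (ρ r)) :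
    ENNReal.ofReal ((n : ℝ) ^ 2 / Real.log (1 / x 1)) ≤
      ∫⁻ r in Set.Ioi (0 : ℝ), ENNReal.ofReal (ρ r ^ 2 * r) := by
  have hx (i) (hi : i ∈ Finset.Icc 1 n) : 0 < x i := left_pos_of_chain hxy hyx hx1 hi
  have hxy' (i) (hi : i ∈ Finset.Icc 1 n) : x i < y i :=
    hxy i (Finset.mem_Icc.1 hi).1 (Finset.mem_Icc.1 hi).2
  have hlog_pos (i) (hi : i ∈ Finset.Icc 1 n) : 0 < log (y i / x i) :=
    log_pos ((one_lt_div (hx i hi)).2 (hxy' i hi))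
  have hlog_sum : ∑ i ∈ Finset.Icc 1 n, log (y i / x i) ≤ log (1 / x 1) := by
    have hn_mem : n ∈ Finset.Icc 1 n := Finset.mem_Icc.2 ⟨hn, le_rfl⟩
    refine (sum_log_div_le_of_chain hxy hyx hx1 hn).trans (log_le_log ?_ (by gcongr))
    exact div_pos ((hx n hn_mem).trans (hxy' n hn_mem)) hx1
  calc ENNReal.ofReal ((n : ℝ) ^ 2 / log (1 / x 1))
      ≤ ENNReal.ofReal (∑ i ∈ Finset.Icc 1 n, (log (y i / x i))⁻¹) :=
        ENNReal.ofReal_le_ofReal (by simpa using Finset.sq_card_div_le_sum_inv _ hlog_pos hlog_sum)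
    _ = ∑ i ∈ Finset.Icc 1 n, ENNReal.ofReal (log (y i / x i))⁻¹ :=
        ENNReal.ofReal_sum_of_nonneg fun i hi => (inv_pos.2 (hlog_pos i hi)).le
    _ ≤ ∑ i ∈ Finset.Icc 1 n, ∫⁻ r in Ioc (x i) (y i), ENNReal.ofReal (ρ r ^ 2 * r) :=
        Finset.sum_le_sum fun i hi => inv_log_div_le_setLIntegral_sq_mul (hx i hi) (hxy' i hi)
          hmeas (hadm i (Finset.mem_Icc.1 hi).1 (Finset.mem_Icc.1 hi).2)
    _ = ∫⁻ r in ⋃ i ∈ Finset.Icc 1 n, Ioc (x i) (y i), ENNReal.ofReal (ρ r ^ 2 * r) :=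
        (lintegral_biUnion_finset (pairwiseDisjoint_Ioc_of_chain hxy hyx)
          (fun _ _ => measurableSet_Ioc) _).symm
    _ ≤ ∫⁻ r in Ioi 0, ENNReal.ofReal (ρ r ^ 2 * r) :=
        lintegral_mono_set <| iUnion₂_subset fun i hi =>
          Ioc_subset_Ioi_self.trans (Ioi_subset_Ioi (hx i hi).le)

theorem stmt_5 (n : ℕ) (hn : 1 ≤ n) (x y : ℕ → ℝ)
    (hx1 : 0 < x 1)
    (hxy : ∀ i, 1 ≤ i → i ≤ n → x i < y i)
    (hyx : ∀ i, 1 ≤ i → i < n → y i < x (i + 1))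
    (hyn : y n < 1)
    (ρ : ℝ → ℝ) (hmeas : Measurable ρ) (hnonneg : ∀ r, 0 < r → 0 ≤ ρ r)
    (hadm : ∀ i, 1 ≤ i → i ≤ n →
      1 ≤ ∫⁻ r in Set.Ioc (x i) (y i), ENNReal.ofReal (ρ r)) :
    ENNReal.ofReal ((n : ℝ) ^ 2 / Real.log (1 / x 1)) ≤
      ∫⁻ r in Set.Ioi (0 : ℝ), ENNReal.ofReal (ρ r ^ 2 * r) :=
  stmt_5_general n hn x y hx1 hxy hyx hyn ρ hmeas hadm
end

section
/- Let h_0(z) = z·e^{−i c_2 log^{3/2}(1/|z|)} for z ∈ 𝔻 \ {0} and h_0(z) = z for z ∉ 𝔻, where c_2 ∈ ℝ. Then |h_0(z)| = |z| for all z, and for every constant c > 0 there exists r_0 > 0 such that for all 0 < r < r_0, |arg(h_0(r))| = |c_2| log^{3/2}(1/r) > c·|log|h_0(r)|| = c·log(1/r). -/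
/-! The twist factor `exp (-i c₂ log^{3/2}(1/|z|))` has modulus one, so `h₀` preserves `|z|` and
`|log |h₀ r|| = log (1/r)`. Since `|c₂| L^{3/2} / L = |c₂| √L → ∞` as `L = log (1/r) → ∞`, i.e. as
`r → 0⁺`, the argument eventually beats any multiple `c L` of the log-modulus. -/

open Filter Topology Real

lemma Complex.norm_mul_exp_neg_I_mul_ofReal_mul_ofReal (z : ℂ) (a b : ℝ) :
    ‖z * Complex.exp (-Complex.I * a * b)‖ = ‖z‖ := by
  rw [norm_mul, show -Complex.I * a * b = ((-(a * b) : ℝ) : ℂ) * Complex.I by push_cast; ring,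
    Complex.norm_exp_ofReal_mul_I, mul_one]

lemma eventually_mul_lt_mul_rpow_atTop (c : ℝ) {a p : ℝ} (ha : 0 < a) (hp : 1 < p) :
    ∀ᶠ L in atTop, c * L < a * L ^ p := by
  filter_upwards [(tendsto_rpow_atTop (sub_pos.2 hp)).eventually_gt_atTop (c / a),
    eventually_gt_atTop 0] with L hLp hL
  calc c * L < a * L ^ (p - 1) * L := by
        gcongr
        rwa [div_lt_iff₀ ha, mul_comm] at hLp
    _ = a * L ^ p := by rw [mul_assoc, ← rpow_add_one hL.ne', sub_add_cancel]

lemma Real.tendsto_log_one_div_nhdsGT_zero : Tendsto (fun r => log (1 / r)) (𝓝[>] 0) atTop := by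
  simpa only [one_div, log_inv, Function.comp_def] using
    tendsto_neg_atBot_atTop.comp tendsto_log_nhdsGT_zero

lemma Real.abs_log_of_mem_Ioo {r : ℝ} (hr : r ∈ Set.Ioo 0 1) : |log r| = log (1 / r) := by
  rw [one_div, log_inv, abs_of_nonpos (log_nonpos hr.1.le hr.2.le)]

theorem stmt_13 (c₂ : ℝ) (hc₂ : c₂ ≠ 0)
    (h₀ : ℂ → ℂ)
    (hin : ∀ z : ℂ, z ≠ 0 → ‖z‖ < 1 →
      h₀ z = z * Complex.exp (-Complex.I * c₂ *
        ((Real.log (1 / ‖z‖)) ^ ((3 : ℝ) / 2) : ℝ)))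
    (hout : ∀ z : ℂ, 1 ≤ ‖z‖ → h₀ z = z) :
    (∀ z : ℂ, z ≠ 0 → ‖h₀ z‖ = ‖z‖) ∧
    (∀ c : ℝ, 0 < c → ∃ r₀ : ℝ, 0 < r₀ ∧ ∀ r : ℝ, 0 < r → r < r₀ →
      |c₂| * (Real.log (1 / r)) ^ ((3 : ℝ) / 2) >
        c * |Real.log ‖h₀ r‖| ∧
      c * |Real.log ‖h₀ r‖| = c * Real.log (1 / r)) := by
  have hnorm : ∀ z : ℂ, z ≠ 0 → ‖h₀ z‖ = ‖z‖ := fun z hz => by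
    rcases lt_or_ge ‖z‖ 1 with hz1 | hz1
    · rw [hin z hz hz1, Complex.norm_mul_exp_neg_I_mul_ofReal_mul_ofReal]
    · rw [hout z hz1]
  refine ⟨hnorm, fun c _ => ?_⟩
  have hsmall : ∀ᶠ r in 𝓝[>] 0,
      r ∈ Set.Ioo 0 1 ∧ c * log (1 / r) < |c₂| * log (1 / r) ^ ((3 : ℝ) / 2) :=
    Filter.Eventually.and (Ioo_mem_nhdsGT one_pos) <| tendsto_log_one_div_nhdsGT_zero.eventually <|
      eventually_mul_lt_mul_rpow_atTop c (abs_pos.2 hc₂) (by norm_num)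
  obtain ⟨r₀, hr₀, hr₀small⟩ := (nhdsGT_basis (0 : ℝ)).eventually_iff.1 hsmall
  refine ⟨r₀, hr₀, fun r hr hrr₀ => ?_⟩
  obtain ⟨hr01, hlt⟩ := hr₀small ⟨hr, hrr₀⟩
  have hlog : |log ‖h₀ r‖| = log (1 / r) := by
    rw [hnorm r (by exact_mod_cast hr.ne'), Complex.norm_real, Real.norm_of_nonneg hr.le,
      abs_log_of_mem_Ioo hr01]
  exact ⟨hlog ▸ hlt, by rw [hlog]⟩
end

section
/- Let c_1 > 0, c_2 ∈ ℝ. For z in B(0,1/2)\{0} define h(z) = (z/|z|)|z|^{c_1 log(1/|z|) − i c_2 log(1/|z|)}. Then the Wirtinger derivatives of h satisfy |h_z(z)| = e^{−c_1 log²(1/|z|)}/|z| · √((1/2 + c_1 log(1/|z|))² + c_2² log²(1/|z|)) and |h_{z̄}(z)| = e^{−c_1 log²(1/|z|)}/|z| · √((c_1 log(1/|z|) − 1/2)² + c_2² log²(1/|z|)); in particular |h_{z̄}(z)| < |h_z(z)| everywhere, so h is sense-preserving with |μ_h(z)| = √((c_1 L − 1/2)² + c_2²L²)/√((c_1 L +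 1/2)² + c_2²L²), L = log(1/|z|). -/
/-!
Writing `κ = c₁ - c₂ i` and `L = log (1 / |z|)`, the map is `h(z) = z · g(|z|²)` with
`g = spiralProfile κ`, i.e. `g(s) = exp (-κ log² s / 4 - log s / 2)`. For any such radial
product the chain rule gives `h_z = g(|z|²) + |z|² g'(|z|²)` and `h_{z̄} = z² g'(|z|²)`, and here
`|z|² g'(|z|²) = g(|z|²) (κ L - 1/2)`. Hence `h_z = g · (κ L + 1/2)` and
`h_{z̄} = (z/|z|)² g · (κ L - 1/2)` with `|g| = e^{-c₁ L²} / |z|`; since `Re (κ L) = c₁ L > 0`,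
the point `κ L - 1/2` is closer to the origin than `κ L + 1/2`.
-/

open Complex Filter Topology

noncomputable section

def wirtingerZ (f : ℂ → ℂ) (z : ℂ) : ℂ := (fderiv ℝ f z 1 - I * fderiv ℝ f z I) / 2

def wirtingerZbar (f : ℂ → ℂ) (z : ℂ) : ℂ := (fderiv ℝ f z 1 + I * fderiv ℝ f z I) / 2

def spiralProfile (κ : ℂ) (s : ℝ) : ℂ :=
  exp (-κ * (Real.log s : ℂ) ^ 2 / 4 - (Real.log s : ℂ) / 2)

end

section RadialProduct

variable {f : ℂ → ℂ} {g : ℝ → ℂ} {g' : ℂ} {z : ℂ}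

theorem fderiv_apply_of_eventuallyEq_mul_comp_sq_norm (hg : HasDerivAt g g' (‖z‖ ^ 2))
    (hf : f =ᶠ[𝓝 z] fun w ↦ w * g (‖w‖ ^ 2)) (v : ℂ) :
    fderiv ℝ f z v = v * g (‖z‖ ^ 2) + 2 * (z.re * v.re + z.im * v.im) * z * g' := by
  have hprod := (hasFDerivAt_id z).mul
    (hg.hasFDerivAt.comp z (hasStrictFDerivAt_norm_sq z).hasFDerivAt)
  rw [(hprod.congr_of_eventuallyEq hf).fderiv]
  simp only [id_eq, ContinuousLinearMap.comp_smul, nsmul_eq_mul, Nat.cast_ofNat,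
    Function.comp_apply, add_apply, smul_apply,
    mul_apply_eq_comp, ContinuousLinearMap.comp_apply, coe_innerSL_apply, Complex.inner, mul_re,
    conj_re, conj_im, mul_neg, sub_neg_eq_add, ContinuousLinearMap.toSpanSingleton_apply,
    real_smul, ofReal_add, ofReal_mul, ContinuousLinearMap.ofNat_apply, smul_eq_mul,
    ContinuousLinearMap.id_apply]
  ring

theorem wirtingerZ_of_eventuallyEq_mul_comp_sq_norm (hg : HasDerivAt g g' (‖z‖ ^ 2))
    (hf : f =ᶠ[𝓝 z] fun w ↦ w * g (‖w‖ ^ 2)) :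
    wirtingerZ f z = g (‖z‖ ^ 2) + ‖z‖ ^ 2 * g' := by
  have hnorm : (‖z‖ : ℂ) ^ 2 = z.re * z.re + z.im * z.im := by
    rw [← ofReal_pow, Complex.sq_norm, normSq_apply]; push_cast; rfl
  rw [wirtingerZ, fderiv_apply_of_eventuallyEq_mul_comp_sq_norm hg hf,
    fderiv_apply_of_eventuallyEq_mul_comp_sq_norm hg hf]
  simp only [one_re, one_im, I_re, I_im, ofReal_one, ofReal_zero]
  linear_combination (-(g' * (z.re - I * z.im))) * (Complex.re_add_im z)
    + (-(g (‖z‖ ^ 2)) / 2 - g' * z.im ^ 2) * I_sq - g' * hnorm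

theorem wirtingerZbar_of_eventuallyEq_mul_comp_sq_norm (hg : HasDerivAt g g' (‖z‖ ^ 2))
    (hf : f =ᶠ[𝓝 z] fun w ↦ w * g (‖w‖ ^ 2)) :
    wirtingerZbar f z = z ^ 2 * g' := by
  rw [wirtingerZbar, fderiv_apply_of_eventuallyEq_mul_comp_sq_norm hg hf,
    fderiv_apply_of_eventuallyEq_mul_comp_sq_norm hg hf]
  simp only [one_re, one_im, I_re, I_im, ofReal_one, ofReal_zero]
  linear_combination (z * g') * (Complex.re_add_im z) + (g (‖z‖ ^ 2) / 2) * I_sq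

end RadialProduct

theorem norm_mul_ofReal_add_ofReal (κ : ℂ) (L a : ℝ) :
    ‖κ * L + a‖ = √((κ.re * L + a) ^ 2 + κ.im ^ 2 * L ^ 2) := by
  have hsplit : κ * L + a = ((κ.re * L + a : ℝ) : ℂ) + ((κ.im * L : ℝ) : ℂ) * I := by
    apply Complex.ext <;> simp
  rw [hsplit, norm_add_mul_I]
  ring_nf

section SpiralProfile

variable (κ : ℂ)

theorem hasDerivAt_spiralProfile {s : ℝ} (hs : s ≠ 0) :
    HasDerivAt (spiralProfile κ) (spiralProfile κ s * ((-κ * Real.log s / 2 - 1 / 2) / s)) s := by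
  have hlog := (Real.hasDerivAt_log hs).ofReal_comp
  convert (((hlog.fun_pow 2).const_mul (-κ)).div_const 4 |>.sub (hlog.div_const 2)).cexp using 1
  · rfl
  rw [spiralProfile, Pi.sub_apply]
  push_cast
  field_simp
  ring

theorem hasDerivAt_spiralProfile_sq_norm {z : ℂ} (hz : z ≠ 0) :
    HasDerivAt (spiralProfile κ)
      (spiralProfile κ (‖z‖ ^ 2) * (κ * Real.log (1 / ‖z‖) - 1 / 2) / ‖z‖ ^ 2) (‖z‖ ^ 2) := by
  have hlog : Real.log (‖z‖ ^ 2) = -2 * Real.log (1 / ‖z‖) := by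
    rw [Real.log_pow, one_div, Real.log_inv]; push_cast; ring
  convert hasDerivAt_spiralProfile κ (pow_ne_zero 2 (norm_ne_zero_iff.mpr hz)) using 1
  rw [hlog]
  push_cast
  ring

theorem norm_spiralProfile_sq_norm {z : ℂ} (hz : z ≠ 0) :
    ‖spiralProfile κ (‖z‖ ^ 2)‖ = Real.exp (-κ.re * Real.log (1 / ‖z‖) ^ 2) / ‖z‖ := by
  set L := Real.log (1 / ‖z‖)
  have hexponent : -κ * (Real.log (‖z‖ ^ 2) : ℂ) ^ 2 / 4 - (Real.log (‖z‖ ^ 2) : ℂ) / 2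
      = -κ * (L ^ 2 : ℝ) + (L : ℝ) := by
    rw [Real.log_pow, show Real.log ‖z‖ = -L by simp [L]]
    push_cast
    ring
  have hnorm : ‖z‖ = Real.exp (-L) := by simp [L, Real.exp_log (norm_pos_iff.mpr hz)]
  rw [spiralProfile, norm_exp, hexponent, hnorm, ← Real.exp_sub]
  congr 1
  simp only [add_re, mul_re, neg_re, neg_im, ofReal_re, ofReal_im]
  ring

end SpiralProfile

section SpiralMap

variable (κ : ℂ) {f : ℂ → ℂ} {z : ℂ}

theorem div_norm_mul_exp_eq_mul_spiralProfile (c₁ c₂ : ℝ) (w : ℂ) :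
    (w / (‖w‖ : ℂ)) * exp (((c₁ * Real.log (1 / ‖w‖) : ℝ) - I * (c₂ * Real.log (1 / ‖w‖) : ℝ)) *
      (Real.log ‖w‖ : ℝ)) = w * spiralProfile (c₁ - c₂ * I) (‖w‖ ^ 2) := by
  rcases eq_or_ne w 0 with rfl | hw
  · simp
  have hnorm : (‖w‖ : ℂ) = exp (Real.log ‖w‖ : ℝ) := by
    rw [← ofReal_exp, Real.exp_log (norm_pos_iff.mpr hw)]
  rw [spiralProfile, hnorm, div_eq_mul_inv, ← exp_neg, mul_assoc, ← exp_add, Real.log_pow,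
    one_div, Real.log_inv]
  push_cast
  ring_nf

theorem wirtingerZ_of_eventuallyEq_spiral (hz : z ≠ 0)
    (hf : f =ᶠ[𝓝 z] fun w ↦ w * spiralProfile κ (‖w‖ ^ 2)) :
    wirtingerZ f z = spiralProfile κ (‖z‖ ^ 2) * (κ * Real.log (1 / ‖z‖) + 1 / 2) := by
  have hz' : (‖z‖ : ℂ) ≠ 0 := ofReal_ne_zero.mpr (norm_ne_zero_iff.mpr hz)
  rw [wirtingerZ_of_eventuallyEq_mul_comp_sq_norm (hasDerivAt_spiralProfile_sq_norm κ hz) hf]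
  field_simp
  ring

theorem wirtingerZbar_of_eventuallyEq_spiral (hz : z ≠ 0)
    (hf : f =ᶠ[𝓝 z] fun w ↦ w * spiralProfile κ (‖w‖ ^ 2)) :
    wirtingerZbar f z =
      (z / ‖z‖) ^ 2 * spiralProfile κ (‖z‖ ^ 2) * (κ * Real.log (1 / ‖z‖) - 1 / 2) := by
  have hz' : (‖z‖ : ℂ) ≠ 0 := ofReal_ne_zero.mpr (norm_ne_zero_iff.mpr hz)
  rw [wirtingerZbar_of_eventuallyEq_mul_comp_sq_norm (hasDerivAt_spiralProfile_sq_norm κ hz) hf]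
  field_simp

theorem norm_wirtingerZ_of_eventuallyEq_spiral (hz : z ≠ 0)
    (hf : f =ᶠ[𝓝 z] fun w ↦ w * spiralProfile κ (‖w‖ ^ 2)) :
    ‖wirtingerZ f z‖ = Real.exp (-κ.re * Real.log (1 / ‖z‖) ^ 2) / ‖z‖ *
      √((κ.re * Real.log (1 / ‖z‖) + 1 / 2) ^ 2 + κ.im ^ 2 * Real.log (1 / ‖z‖) ^ 2) := by
  rw [wirtingerZ_of_eventuallyEq_spiral κ hz hf, norm_mul, norm_spiralProfile_sq_norm κ hz,
    ← norm_mul_ofReal_add_ofReal]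
  push_cast
  rfl

theorem norm_wirtingerZbar_of_eventuallyEq_spiral (hz : z ≠ 0)
    (hf : f =ᶠ[𝓝 z] fun w ↦ w * spiralProfile κ (‖w‖ ^ 2)) :
    ‖wirtingerZbar f z‖ = Real.exp (-κ.re * Real.log (1 / ‖z‖) ^ 2) / ‖z‖ *
      √((κ.re * Real.log (1 / ‖z‖) - 1 / 2) ^ 2 + κ.im ^ 2 * Real.log (1 / ‖z‖) ^ 2) := by
  have hunit : ‖(z / ‖z‖ : ℂ) ^ 2‖ = 1 := by simp [div_self (norm_ne_zero_iff.mpr hz)]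
  have hshift : κ * Real.log (1 / ‖z‖) - 1 / 2 =
      κ * Real.log (1 / ‖z‖) + ((-(1 / 2) : ℝ) : ℂ) := by
    push_cast; ring
  rw [wirtingerZbar_of_eventuallyEq_spiral κ hz hf, norm_mul, norm_mul, hunit, one_mul,
    norm_spiralProfile_sq_norm κ hz, hshift, norm_mul_ofReal_add_ofReal, ← sub_eq_add_neg]

end SpiralMap

theorem stmt_18 (c₁ c₂ : ℝ) (hc₁ : 0 < c₁)
    (h : ℂ → ℂ)
    (hdef : ∀ z : ℂ, z ≠ 0 → ‖z‖ < 1 / 2 →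
      h z = (z / (‖z‖ : ℂ)) *
        Complex.exp (((c₁ * Real.log (1 / ‖z‖) : ℝ) -
          Complex.I * (c₂ * Real.log (1 / ‖z‖) : ℝ)) *
          (Real.log (‖z‖) : ℝ))) :
    ∀ z : ℂ, z ≠ 0 → ‖z‖ < 1 / 2 →
      ‖((fderiv ℝ h z 1 - Complex.I * fderiv ℝ h z Complex.I) / 2)‖ =
        Real.exp (-c₁ * Real.log (1 / ‖z‖) ^ 2) / ‖z‖ *
          Real.sqrt ((1 / 2 + c₁ * Real.log (1 / ‖z‖)) ^ 2 +
            c₂ ^ 2 * Real.log (1 / ‖z‖) ^ 2) ∧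
      ‖((fderiv ℝ h z 1 + Complex.I * fderiv ℝ h z Complex.I) / 2)‖ =
        Real.exp (-c₁ * Real.log (1 / ‖z‖) ^ 2) / ‖z‖ *
          Real.sqrt ((c₁ * Real.log (1 / ‖z‖) - 1 / 2) ^ 2 +
            c₂ ^ 2 * Real.log (1 / ‖z‖) ^ 2) ∧
      ‖((fderiv ℝ h z 1 + Complex.I * fderiv ℝ h z Complex.I) / 2)‖ <
        ‖((fderiv ℝ h z 1 - Complex.I * fderiv ℝ h z Complex.I) / 2)‖ ∧
      ‖(((fderiv ℝ h z 1 + Complex.I * fderiv ℝ h z Complex.I) / 2) /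
          ((fderiv ℝ h z 1 - Complex.I * fderiv ℝ h z Complex.I) / 2))‖ =
        Real.sqrt ((c₁ * Real.log (1 / ‖z‖) - 1 / 2) ^ 2 +
            c₂ ^ 2 * Real.log (1 / ‖z‖) ^ 2) /
        Real.sqrt ((c₁ * Real.log (1 / ‖z‖) + 1 / 2) ^ 2 +
            c₂ ^ 2 * Real.log (1 / ‖z‖) ^ 2) := by
  intro z hz hzr
  set κ : ℂ := c₁ - c₂ * I
  set L := Real.log (1 / ‖z‖)
  have hr : 0 < ‖z‖ := norm_pos_iff.mpr hz
  have hL : 0 < L := Real.log_pos (one_lt_one_div hr (by linarith))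
  have hf : h =ᶠ[𝓝 z] fun w ↦ w * spiralProfile κ (‖w‖ ^ 2) := by
    filter_upwards [(isOpen_ne.inter (isOpen_lt continuous_norm continuous_const)).mem_nhds
      ⟨hz, hzr⟩] with w ⟨hw, hwr⟩
    rw [hdef w hw hwr, div_norm_mul_exp_eq_mul_spiralProfile]
  have hre : κ.re = c₁ := by simp [κ]
  have him : κ.im ^ 2 = c₂ ^ 2 := by simp [κ]
  have hZ := norm_wirtingerZ_of_eventuallyEq_spiral κ hz hf
  have hZbar := norm_wirtingerZbar_of_eventuallyEq_spiral κ hz hf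
  rw [hre, him] at hZ hZbar
  have hpos : 0 < Real.exp (-c₁ * L ^ 2) / ‖z‖ := by positivity
  have hsqrt :
      √((c₁ * L - 1 / 2) ^ 2 + c₂ ^ 2 * L ^ 2) < √((c₁ * L + 1 / 2) ^ 2 + c₂ ^ 2 * L ^ 2) :=
    Real.sqrt_lt_sqrt (by positivity) (by nlinarith [mul_pos hc₁ hL])
  have hlt : ‖wirtingerZbar h z‖ < ‖wirtingerZ h z‖ := by
    rw [hZ, hZbar]
    exact mul_lt_mul_of_pos_left hsqrt hpos
  have hratio : ‖wirtingerZbar h z / wirtingerZ h z‖ =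
      √((c₁ * L - 1 / 2) ^ 2 + c₂ ^ 2 * L ^ 2) / √((c₁ * L + 1 / 2) ^ 2 + c₂ ^ 2 * L ^ 2) := by
    rw [norm_div, hZ, hZbar, mul_div_mul_left _ _ hpos.ne']
  exact ⟨by rw [add_comm (1 / 2 : ℝ)]; exact hZ, hZbar, hlt, hratio⟩
end
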